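/- arXiv:1810.10135 — 3 statements merged into one kernel-verified Lean document; each statement's English description precedes it below -/
import Mathlib

section
/- Let U ∈ R_{≥0}^{(N+1)×m} and Y ∈ R_{≥0}^{(N+1)×m} with N ≥ q, and suppose for all i ∈ {0,...,N} there exists j ∈ {1,...,m} with U_{0j} > 0 and Y_{ij} > 0. Then the loss F(h) = I(Y || T(h)U) is strictly convex on its effective domain {h ∈ R_{≥0}^{q+1} : F(h) < ∞}. -/
open scoped BigOperators

/-- Csiszár I-divergence between nonnegative matrices, valued in `[0,∞]` (as `EReal`),
with conventions `0·log 0 = 0`, `0/0 = 0` and `p/0 = ∞` for `p > 0`. -/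
noncomputable def IdivM {n m : ℕ} (Y Z : Fin n → Fin m → ℝ) : EReal :=
  ∑ i, ∑ j, if Z i j = 0 ∧ 0 < Y i j then (⊤ : EReal)
    else ((Y i j * Real.log (Y i j / Z i j) - Y i j + Z i j : ℝ) : EReal)

/-- The columnwise convolution `(T(h)U)_{ij} = ∑_{k=0}^{min(i,q)} h_k U_{i-k,j}`. -/
def convM (q N m : ℕ) (h : Fin (q + 1) → ℝ) (U : Fin (N + 1) → Fin m → ℝ) :
    Fin (N + 1) → Fin m → ℝ :=
  fun i j => ∑ k : Fin (q + 1),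
    if (k : ℕ) ≤ (i : ℕ) then
      h k * U ⟨(i : ℕ) - (k : ℕ), Nat.lt_of_le_of_lt (Nat.sub_le _ _) i.isLt⟩ j
    else 0

lemma ereal_coe_sum {α : Type*} (s : Finset α) (f : α → ℝ) :
    ((∑ a ∈ s, f a : ℝ) : EReal) = ∑ a ∈ s, (f a : EReal) :=
  map_sum (⟨⟨Real.toEReal, EReal.coe_zero⟩, EReal.coe_add⟩ : ℝ →+ EReal) f s

lemma ereal_sum_ne_bot {α : Type*} [DecidableEq α] (s : Finset α) (f : α → EReal)
    (h : ∀ a ∈ s, f a ≠ ⊥) : ∑ a ∈ s, f a ≠ ⊥ := by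
  induction s using Finset.induction_on with
  | empty => simp
  | insert _ _ hnotmem ih =>
    rw [Finset.sum_insert hnotmem]
    intro hbot
    rcases EReal.add_eq_bot_iff.mp hbot with h1 | h1
    · exact h _ (Finset.mem_insert_self _ _) h1
    · exact ih (fun a ha => h a (Finset.mem_insert_of_mem ha)) h1

lemma ereal_sum_eq_top {α : Type*} [DecidableEq α] (s : Finset α) (f : α → EReal)
    (hb : ∀ a ∈ s, f a ≠ ⊥) (a : α) (ha : a ∈ s) (hta : f a = ⊤) :
    ∑ x ∈ s, f x = ⊤ := by
  rw [← Finset.add_sum_erase s f ha, hta]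
  exact EReal.top_add_of_ne_bot
    (ereal_sum_ne_bot _ _ (fun b hb' => hb b (Finset.mem_of_mem_erase hb')))

lemma key_le (t y z₁ z₂ : ℝ) (ht0 : 0 < t) (ht1 : t < 1) (hy : 0 ≤ y)
    (hz₁ : 0 ≤ z₁) (hz₂ : 0 ≤ z₂) (hp₁ : 0 < y → 0 < z₁) (hp₂ : 0 < y → 0 < z₂) :
    y * Real.log (y / (t * z₁ + (1 - t) * z₂)) - y + (t * z₁ + (1 - t) * z₂)
      ≤ t * (y * Real.log (y / z₁) - y + z₁)
        + (1 - t) * (y * Real.log (y / z₂) - y + z₂) := by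
  rcases hy.eq_or_lt with hy0 | hy0
  · subst hy0; simp
  · have hz₁' := hp₁ hy0
    have hz₂' := hp₂ hy0
    have hzt : 0 < t * z₁ + (1 - t) * z₂ := by nlinarith
    have hcon : t * Real.log z₁ + (1 - t) * Real.log z₂
        ≤ Real.log (t * z₁ + (1 - t) * z₂) := by
      have h2 : t • Real.log z₁ + (1 - t) • Real.log z₂
          ≤ Real.log (t • z₁ + (1 - t) • z₂) :=
        strictConcaveOn_log_Ioi.concaveOn.2 (Set.mem_Ioi.mpr hz₁')
          (Set.mem_Ioi.mpr hz₂') ht0.le (by linarith) (by ring)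
      simpa [smul_eq_mul] using h2
    rw [Real.log_div hy0.ne' hzt.ne', Real.log_div hy0.ne' hz₁'.ne',
      Real.log_div hy0.ne' hz₂'.ne']
    have hmul := mul_le_mul_of_nonneg_left hcon hy0.le
    nlinarith [hmul]

lemma key_lt (t y z₁ z₂ : ℝ) (ht0 : 0 < t) (ht1 : t < 1) (hy : 0 < y)
    (hz₁ : 0 < z₁) (hz₂ : 0 < z₂) (hne : z₁ ≠ z₂) :
    y * Real.log (y / (t * z₁ + (1 - t) * z₂)) - y + (t * z₁ + (1 - t) * z₂)
      < t * (y * Real.log (y / z₁) - y + z₁)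
        + (1 - t) * (y * Real.log (y / z₂) - y + z₂) := by
  have hzt : 0 < t * z₁ + (1 - t) * z₂ := by nlinarith
  have hcon : t * Real.log z₁ + (1 - t) * Real.log z₂
      < Real.log (t * z₁ + (1 - t) * z₂) := by
    have h2 : t • Real.log z₁ + (1 - t) • Real.log z₂
        < Real.log (t • z₁ + (1 - t) • z₂) :=
      strictConcaveOn_log_Ioi.2 (Set.mem_Ioi.mpr hz₁)
        (Set.mem_Ioi.mpr hz₂) hne ht0 (by linarith) (by ring)
    simpa [smul_eq_mul] using h2
  rw [Real.log_div hy.ne' hzt.ne', Real.log_div hy.ne' hz₁.ne',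
    Real.log_div hy.ne' hz₂.ne']
  have hmul := mul_lt_mul_of_pos_left hcon hy
  nlinarith [hmul]


-- nonnegativity of convM
lemma convM_nonneg (q N m : ℕ) (h : Fin (q + 1) → ℝ) (U : Fin (N + 1) → Fin m → ℝ)
    (hh : ∀ k, 0 ≤ h k) (hU : ∀ i j, 0 ≤ U i j) (i : Fin (N + 1)) (j : Fin m) :
    0 ≤ convM q N m h U i j := by
  apply Finset.sum_nonneg
  intro k _
  split
  · exact mul_nonneg (hh k) (hU _ _)
  · exact le_refl 0

-- affine combination
lemma convM_affine (q N m : ℕ) (t : ℝ) (h₁ h₂ : Fin (q + 1) → ℝ)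
    (U : Fin (N + 1) → Fin m → ℝ) (i : Fin (N + 1)) (j : Fin m) :
    convM q N m (fun k => t * h₁ k + (1 - t) * h₂ k) U i j
      = t * convM q N m h₁ U i j + (1 - t) * convM q N m h₂ U i j := by
  simp only [convM, Finset.mul_sum, ← Finset.sum_add_distrib]
  apply Finset.sum_congr rfl
  intro k _
  split <;> ring

-- from finiteness: positivity of Z where Y is positive
lemma pos_of_IdivM_lt_top {N m : ℕ} (Y Z : Fin (N + 1) → Fin m → ℝ)
    (hZ : ∀ i j, 0 ≤ Z i j) (hfin : IdivM Y Z < ⊤) :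
    ∀ i j, 0 < Y i j → 0 < Z i j := by
  intro i j hYij
  by_contra hc
  have hZ0 : Z i j = 0 := le_antisymm (not_lt.mp hc) (hZ i j)
  have hterm : (if Z i j = 0 ∧ 0 < Y i j then (⊤ : EReal)
      else ((Y i j * Real.log (Y i j / Z i j) - Y i j + Z i j : ℝ) : EReal)) = ⊤ := by
    simp [hZ0, hYij]
  have hinner : (∑ j', (if Z i j' = 0 ∧ 0 < Y i j' then (⊤ : EReal)
      else ((Y i j' * Real.log (Y i j' / Z i j') - Y i j' + Z i j' : ℝ) : EReal))) = ⊤ := by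
    apply ereal_sum_eq_top _ _ _ j (Finset.mem_univ j) hterm
    intro a _
    split
    · exact (by simp : (⊤ : EReal) ≠ ⊥)
    · exact EReal.coe_ne_bot _
  have : IdivM Y Z = ⊤ := by
    apply ereal_sum_eq_top _ _ _ i (Finset.mem_univ i) hinner
    intro a _
    apply ereal_sum_ne_bot
    intro b _
    split
    · exact (by simp : (⊤ : EReal) ≠ ⊥)
    · exact EReal.coe_ne_bot _
  rw [this] at hfin
  exact lt_irrefl _ hfin

-- IdivM as a real number when no blowup
lemma IdivM_eq_coe {N m : ℕ} (Y Z : Fin (N + 1) → Fin m → ℝ)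
    (h : ∀ i j, 0 < Y i j → Z i j ≠ 0) :
    IdivM Y Z = ((∑ i, ∑ j, (Y i j * Real.log (Y i j / Z i j) - Y i j + Z i j) : ℝ) : EReal) := by
  rw [ereal_coe_sum]
  apply Finset.sum_congr rfl
  intro i _
  rw [ereal_coe_sum]
  apply Finset.sum_congr rfl
  intro j _
  rw [if_neg]
  rintro ⟨hz, hy⟩
  exact h i j hy hz

/-- under the condition that for every row index `i` there is an
experiment `j` with `U_{0j} > 0` and `Y_{ij} > 0`, the loss
`F(h) = I(Y‖T(h)U)` is strictly convex on its effective domain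
`{h ∈ ℝ₊^{q+1} : F(h) < ∞}`. -/
theorem F_strictConvex (q N m : ℕ) (hqN : q ≤ N)
    (U Y : Fin (N + 1) → Fin m → ℝ)
    (hU : ∀ i j, 0 ≤ U i j) (hY : ∀ i j, 0 ≤ Y i j)
    (hcond : ∀ i : Fin (N + 1), ∃ j : Fin m, 0 < U 0 j ∧ 0 < Y i j) :
    ∀ (h₁ h₂ : Fin (q + 1) → ℝ), (∀ k, 0 ≤ h₁ k) → (∀ k, 0 ≤ h₂ k) → h₁ ≠ h₂ →
      IdivM Y (convM q N m h₁ U) < ⊤ → IdivM Y (convM q N m h₂ U) < ⊤ →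
      ∀ t : ℝ, t ∈ Set.Ioo (0 : ℝ) 1 →
        IdivM Y (convM q N m (fun k => t * h₁ k + (1 - t) * h₂ k) U)
          < (t : EReal) * IdivM Y (convM q N m h₁ U)
            + ((1 - t : ℝ) : EReal) * IdivM Y (convM q N m h₂ U) := by
  intro h₁ h₂ hh₁ hh₂ hne hF₁ hF₂ t ht
  obtain ⟨ht0, ht1⟩ := ht
  set Z₁ := convM q N m h₁ U with hZ₁def
  set Z₂ := convM q N m h₂ U with hZ₂def
  set Zt := convM q N m (fun k => t * h₁ k + (1 - t) * h₂ k) U with hZtdef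
  have hZ₁nn : ∀ i j, 0 ≤ Z₁ i j := convM_nonneg q N m h₁ U hh₁ hU
  have hZ₂nn : ∀ i j, 0 ≤ Z₂ i j := convM_nonneg q N m h₂ U hh₂ hU
  have hZ₁pos : ∀ i j, 0 < Y i j → 0 < Z₁ i j := pos_of_IdivM_lt_top Y Z₁ hZ₁nn hF₁
  have hZ₂pos : ∀ i j, 0 < Y i j → 0 < Z₂ i j := pos_of_IdivM_lt_top Y Z₂ hZ₂nn hF₂
  have hZt : ∀ i j, Zt i j = t * Z₁ i j + (1 - t) * Z₂ i j :=
    fun i j => convM_affine q N m t h₁ h₂ U i j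
  have hZtpos : ∀ i j, 0 < Y i j → 0 < Zt i j := by
    intro i j hy
    rw [hZt]
    have := hZ₁pos i j hy
    have := hZ₂pos i j hy
    nlinarith
  -- rewrite all IdivM as real coes
  rw [IdivM_eq_coe Y Z₁ (fun i j hy => (hZ₁pos i j hy).ne'),
      IdivM_eq_coe Y Z₂ (fun i j hy => (hZ₂pos i j hy).ne'),
      IdivM_eq_coe Y Zt (fun i j hy => (hZtpos i j hy).ne'),
      ← EReal.coe_mul, ← EReal.coe_mul, ← EReal.coe_add]
  rw [EReal.coe_lt_coe_iff]
  -- special index where strict inequality holds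
  have hex : ∃ n : ℕ, ∃ hn : n < q + 1, h₁ ⟨n, hn⟩ ≠ h₂ ⟨n, hn⟩ := by
    obtain ⟨k, hk⟩ := Function.ne_iff.mp hne
    exact ⟨k, k.isLt, by simpa using hk⟩
  set K := Nat.find hex with hKdef
  obtain ⟨hKlt, hKne⟩ := Nat.find_spec hex
  have hmin : ∀ n (hn : n < q + 1), n < K → h₁ ⟨n, hn⟩ = h₂ ⟨n, hn⟩ := by
    intro n hn hnK
    by_contra hcne
    exact Nat.find_min hex hnK ⟨hn, hcne⟩
  have hKN : K < N + 1 := by omega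
  set i₀ : Fin (N + 1) := ⟨K, hKN⟩ with hi₀
  obtain ⟨j₀, hU0, hY0⟩ := hcond i₀
  have hZdiff : Z₁ i₀ j₀ - Z₂ i₀ j₀ = (h₁ ⟨K, hKlt⟩ - h₂ ⟨K, hKlt⟩) * U 0 j₀ := by
    rw [hZ₁def, hZ₂def]
    simp only [convM, ← Finset.sum_sub_distrib]
    rw [Finset.sum_eq_single (⟨K, hKlt⟩ : Fin (q + 1))]
    · have hKK : (K : ℕ) ≤ (i₀ : ℕ) := le_refl _
      rw [if_pos hKK]
      have h0 : (⟨(i₀ : ℕ) - K, Nat.lt_of_le_of_lt (Nat.sub_le _ _) i₀.isLt⟩ : Fin (N + 1))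
          = 0 := by
        apply Fin.ext
        simp [hi₀]
      rw [h0]
      rw [if_pos (le_refl K)]
      ring
    · intro k _ hkK
      split
      · rename_i hki
        have hkval : (k : ℕ) < K := by
          rcases lt_or_ge (k : ℕ) K with h | h
          · exact h
          · exfalso
            have : (k : ℕ) = K := le_antisymm (by simpa [hi₀] using hki) h
            exact hkK (Fin.ext this)
        have : h₁ k = h₂ k := by
          have := hmin (k : ℕ) k.isLt hkval
          simpa [Fin.eta] using this
        rw [this]; ring
      · ring
    · intro habs
      exact absurd (Finset.mem_univ _) habs
  have hZne : Z₁ i₀ j₀ ≠ Z₂ i₀ j₀ := by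
    intro heq
    rw [heq, sub_self] at hZdiff
    exact mul_ne_zero (sub_ne_zero.mpr hKne) hU0.ne' hZdiff.symm
  -- the real inequality
  have hRHS : t * (∑ i, ∑ j, (Y i j * Real.log (Y i j / Z₁ i j) - Y i j + Z₁ i j))
      + (1 - t) * (∑ i, ∑ j, (Y i j * Real.log (Y i j / Z₂ i j) - Y i j + Z₂ i j))
      = ∑ i, ∑ j, (t * (Y i j * Real.log (Y i j / Z₁ i j) - Y i j + Z₁ i j)
        + (1 - t) * (Y i j * Real.log (Y i j / Z₂ i j) - Y i j + Z₂ i j)) := by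
    simp only [Finset.mul_sum, ← Finset.sum_add_distrib]
  rw [hRHS]
  apply Finset.sum_lt_sum
  · intro i _
    apply Finset.sum_le_sum
    intro j _
    rw [hZt]
    exact key_le t (Y i j) (Z₁ i j) (Z₂ i j) ht0 ht1 (hY i j) (hZ₁nn i j) (hZ₂nn i j)
      (hZ₁pos i j) (hZ₂pos i j)
  · refine ⟨i₀, Finset.mem_univ _, ?_⟩
    apply Finset.sum_lt_sum
    · intro j _
      rw [hZt]
      exact key_le t (Y i₀ j) (Z₁ i₀ j) (Z₂ i₀ j) ht0 ht1 (hY i₀ j) (hZ₁nn i₀ j) (hZ₂nn i₀ j)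
        (hZ₁pos i₀ j) (hZ₂pos i₀ j)
    · refine ⟨j₀, Finset.mem_univ _, ?_⟩
      rw [hZt]
      exact key_lt t (Y i₀ j₀) (Z₁ i₀ j₀) (Z₂ i₀ j₀) ht0 ht1 hY0
        (hZ₁pos i₀ j₀ hY0) (hZ₂pos i₀ j₀ hY0) hZne
end

section
/- Invariant simplex: for every t ≥ 1, the iterates of Algorithm 3.1 satisfy Σ_{k=0}^q h^{t}_k Σ_{l=0}^{N-k} U_{l·} = Σ_{i,j} Y_{ij}. Hence all iterates h^t (t ≥ 1) lie in a fixed compact subset of R_{≥0}^{q+1} provided Σ_{l=0}^{N-q} U_{l·} > 0. -/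
/-!
Algorithm 3.1 is the EM (multiplicative) update for the mixture `∑_k h_k S^k U` of shifted
copies of `U`: each datum `Y_ij` is split among the components in proportion to
`h_k U_{i-k,j} / (T(h)U)_{ij}`, and component `k`'s share is divided by its weight
`∑_{l ≤ N-k} U_{l·}`. Multiplying back by the weights and summing over `k` therefore returns
`∑ Y_ij`, provided no positive datum has model value zero. That admissibility is preserved by
the step, since a component with `h_k U_{i-k,j} > 0` keeps a positive weight. As the weights
decrease in `k`, nonnegativity and the identity confine each `h^t_k` to
`[0, ∑ Y_ij / ∑_{l ≤ N-q} U_{l·}]`.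
-/

open scoped BigOperators

/-- The partial row sum `∑_{l=0}^{N-k} U_{l·} = ∑_{l=0}^{N-k} ∑_j U_{lj}`. -/
def rowsum (N m : ℕ) (U : Fin (N + 1) → Fin m → ℝ) (k : ℕ) : ℝ :=
  ∑ l : Fin (N + 1), if (l : ℕ) ≤ N - k then ∑ j, U l j else 0

/-- One step of the alternating-minimization algorithm (Algorithm 3.1):
`h⁺_k = (h_k / ∑_{l=0}^{N-k} U_{l·}) ∑_j ∑_{i=k}^N Y_{ij} U_{i-k,j} / (T(h)U)_{ij}`. -/
noncomputable def upd (q N m : ℕ) (U Y : Fin (N + 1) → Fin m → ℝ)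
    (h : Fin (q + 1) → ℝ) : Fin (q + 1) → ℝ :=
  fun k => (h k / rowsum N m U k) *
    ∑ j, ∑ i : Fin (N + 1),
      if (k : ℕ) ≤ (i : ℕ) then
        Y i j * U ⟨(i : ℕ) - (k : ℕ), Nat.lt_of_le_of_lt (Nat.sub_le _ _) i.isLt⟩ j
          / convM q N m h U i j
      else 0

/-- The partial derivative `∂F/∂h_k` of `F(h) = I(Y‖T(h)U)`:
`∂F/∂h_k(h) = ∑_{l=0}^{N-k} U_{l·} - ∑_j ∑_{i=k}^N Y_{ij}U_{i-k,j}/(T(h)U)_{ij}`. -/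
noncomputable def gradF (q N m : ℕ) (U Y : Fin (N + 1) → Fin m → ℝ)
    (h : Fin (q + 1) → ℝ) (k : Fin (q + 1)) : ℝ :=
  rowsum N m U k -
    ∑ j, ∑ i : Fin (N + 1),
      if (k : ℕ) ≤ (i : ℕ) then
        Y i j * U ⟨(i : ℕ) - (k : ℕ), Nat.lt_of_le_of_lt (Nat.sub_le _ _) i.isLt⟩ j
          / convM q N m h U i j
      else 0

namespace EM

variable {κ ι : Type*} [Fintype κ]

def mixture (A : κ → ι → ℝ) (h : κ → ℝ) (i : ι) : ℝ :=
  ∑ k, h k * A k i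

noncomputable def step [Fintype ι] (c : κ → ℝ) (A : κ → ι → ℝ) (y : ι → ℝ) (h : κ → ℝ) :
    κ → ℝ :=
  fun k => h k / c k * ∑ i, y i * A k i / mixture A h i

variable {c : κ → ℝ} {A : κ → ι → ℝ} {y : ι → ℝ} {h : κ → ℝ}

theorem mixture_nonneg (hA : ∀ k i, 0 ≤ A k i) (hh : ∀ k, 0 ≤ h k) (i : ι) :
    0 ≤ mixture A h i :=
  Finset.sum_nonneg fun k _ => mul_nonneg (hh k) (hA k i)

variable [Fintype ι]

theorem step_mul_eq (hc : ∀ k i, A k i ≠ 0 → c k ≠ 0) (k : κ) :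
    step c A y h k * c k = h k * ∑ i, y i * A k i / mixture A h i := by
  by_cases hck : c k = 0
  · have hAk : ∀ i, A k i = 0 := fun i => not_not.mp fun hAi => hc k i hAi hck
    simp [step, hck, hAk]
  · simp only [step]
    field_simp

theorem sum_step_mul_eq (hc : ∀ k i, A k i ≠ 0 → c k ≠ 0)
    (hy : ∀ i, y i ≠ 0 → mixture A h i ≠ 0) :
    ∑ k, step c A y h k * c k = ∑ i, y i := by
  calc ∑ k, step c A y h k * c k
      = ∑ k, ∑ i, y i / mixture A h i * (h k * A k i) := by
        refine Finset.sum_congr rfl fun k _ => ?_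
        rw [step_mul_eq hc, Finset.mul_sum]
        exact Finset.sum_congr rfl fun i _ => by ring
    _ = ∑ i, y i / mixture A h i * mixture A h i := by
        rw [Finset.sum_comm]
        simp only [mixture, Finset.mul_sum]
    _ = ∑ i, y i := by
        refine Finset.sum_congr rfl fun i _ => ?_
        by_cases hyi : y i = 0
        · simp [hyi]
        · exact div_mul_cancel₀ _ (hy i hyi)

theorem step_nonneg (hA : ∀ k i, 0 ≤ A k i) (hy : ∀ i, 0 ≤ y i) (hc : ∀ k, 0 ≤ c k)
    (hh : ∀ k, 0 ≤ h k) (k : κ) : 0 ≤ step c A y h k :=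
  mul_nonneg (div_nonneg (hh k) (hc k)) <| Finset.sum_nonneg fun i _ =>
    div_nonneg (mul_nonneg (hy i) (hA k i)) (mixture_nonneg hA hh i)

variable (A y) in
def Admissible (h : κ → ℝ) : Prop :=
  (∀ k, 0 ≤ h k) ∧ ∀ i, 0 < y i → 0 < mixture A h i

theorem Admissible.step (hA : ∀ k i, 0 ≤ A k i) (hy : ∀ i, 0 ≤ y i) (hc0 : ∀ k, 0 ≤ c k)
    (hc : ∀ k i, A k i ≠ 0 → c k ≠ 0) (hadm : Admissible A y h) :
    Admissible A y (step c A y h) := by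
  obtain ⟨hh, hmix⟩ := hadm
  have hstep := step_nonneg hA hy hc0 hh
  refine ⟨hstep, fun i hyi => ?_⟩
  obtain ⟨k, -, hk⟩ := (Finset.sum_pos_iff_of_nonneg fun k _ => mul_nonneg (hh k) (hA k i)).mp
    (hmix i hyi)
  have hAki : 0 < A k i := pos_of_mul_pos_right hk (hh k)
  have hck : 0 < c k := (hc0 k).lt_of_ne' (hc k i hAki.ne')
  have hsum : 0 < ∑ i', y i' * A k i' / mixture A h i' :=
    Finset.sum_pos'
      (fun i' _ => div_nonneg (mul_nonneg (hy i') (hA k i')) (mixture_nonneg hA hh i'))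
      ⟨i, Finset.mem_univ i, div_pos (mul_pos hyi hAki) (hmix i hyi)⟩
  have hstepk : 0 < EM.step c A y h k :=
    mul_pos (div_pos (pos_of_mul_pos_left hk (hA k i)) hck) hsum
  exact Finset.sum_pos' (fun k' _ => mul_nonneg (hstep k') (hA k' i))
    ⟨k, Finset.mem_univ k, mul_pos hstepk hAki⟩

end EM

theorem le_div_of_sum_mul_eq {κ : Type*} [Fintype κ] {h c : κ → ℝ} {c₀ M : ℝ}
    (hh : ∀ k, 0 ≤ h k) (hc : ∀ k, c₀ ≤ c k) (hc₀ : 0 < c₀) (hsum : ∑ k, h k * c k = M)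
    (k : κ) : h k ≤ M / c₀ := by
  rw [le_div_iff₀ hc₀, ← hsum]
  calc h k * c₀ ≤ h k * c k := mul_le_mul_of_nonneg_left (hc k) (hh k)
    _ ≤ ∑ k, h k * c k := Finset.single_le_sum
        (fun k' _ => mul_nonneg (hh k') (hc₀.le.trans (hc k'))) (Finset.mem_univ k)

section Deconvolution

variable {q N m : ℕ} {U : Fin (N + 1) → Fin m → ℝ}

variable (U) in
/-- `(S^k U)_{ij} = U_{i-k,j}` (zero for `i < k`), indexed by the pair `(i, j)`; `convM` is the
mixture of these shifted matrices with weights `h`, which makes `upd` an EM step. -/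
def shiftRows (k : ℕ) (p : Fin (N + 1) × Fin m) : ℝ :=
  if k ≤ (p.1 : ℕ) then U ⟨(p.1 : ℕ) - k, Nat.lt_of_le_of_lt (Nat.sub_le _ _) p.1.isLt⟩ p.2
  else 0

theorem shiftRows_nonneg (hU : ∀ i j, 0 ≤ U i j) (k : ℕ) (p : Fin (N + 1) × Fin m) :
    0 ≤ shiftRows U k p := by
  unfold shiftRows
  split_ifs
  exacts [hU _ _, le_rfl]

theorem rowsum_nonneg (hU : ∀ i j, 0 ≤ U i j) (k : ℕ) : 0 ≤ rowsum N m U k :=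
  Finset.sum_nonneg fun l _ => by
    split_ifs
    exacts [Finset.sum_nonneg fun j _ => hU l j, le_rfl]

theorem rowsum_antitone (hU : ∀ i j, 0 ≤ U i j) : Antitone (rowsum N m U) := by
  intro k k' hkk'
  refine Finset.sum_le_sum fun l _ => ?_
  have hl : 0 ≤ ∑ j, U l j := Finset.sum_nonneg fun j _ => hU l j
  split_ifs with hk' hk
  · exact le_rfl
  · omega
  · exact hl
  · exact le_rfl

theorem shiftRows_le_rowsum (hU : ∀ i j, 0 ≤ U i j) (k : ℕ) (p : Fin (N + 1) × Fin m) :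
    shiftRows U k p ≤ rowsum N m U k := by
  unfold shiftRows
  split_ifs with hk
  · set l : Fin (N + 1) := ⟨(p.1 : ℕ) - k, Nat.lt_of_le_of_lt (Nat.sub_le _ _) p.1.isLt⟩
    have hl : (l : ℕ) ≤ N - k := Nat.sub_le_sub_right (Nat.le_of_lt_succ p.1.isLt) k
    calc U l p.2 ≤ ∑ j, U l j := Finset.single_le_sum (fun j _ => hU l j) (Finset.mem_univ _)
      _ = if (l : ℕ) ≤ N - k then ∑ j, U l j else 0 := (if_pos hl).symm
      _ ≤ rowsum N m U k := Finset.single_le_sum (f := fun l : Fin (N + 1) =>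
          if (l : ℕ) ≤ N - k then ∑ j, U l j else 0)
          (fun l' _ => by split_ifs; exacts [Finset.sum_nonneg fun j _ => hU l' j, le_rfl])
          (Finset.mem_univ l)
  · exact rowsum_nonneg hU k

theorem convM_eq_mixture (h : Fin (q + 1) → ℝ) (i : Fin (N + 1)) (j : Fin m) :
    convM q N m h U i j = EM.mixture (fun k : Fin (q + 1) => shiftRows U k) h (i, j) := by
  simp only [convM, EM.mixture, shiftRows, mul_ite, mul_zero]

variable (q U) in
theorem upd_eq_step (Y : Fin (N + 1) → Fin m → ℝ) :
    upd q N m U Y = EM.step (fun k : Fin (q + 1) => rowsum N m U k)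
      (fun k => shiftRows U k) (fun p => Y p.1 p.2) := by
  funext h k
  simp only [upd, EM.step, ← convM_eq_mixture, Fintype.sum_prod_type, shiftRows, mul_ite,
    mul_zero, ite_div, zero_div]
  rw [Finset.sum_comm]

end Deconvolution

theorem invariant_simplex_general (q N m : ℕ)
    (U Y : Fin (N + 1) → Fin m → ℝ)
    (hU : ∀ i j, 0 ≤ U i j) (hY : ∀ i j, 0 ≤ Y i j)
    (h₀ : Fin (q + 1) → ℝ) (h₀pos : ∀ k, 0 < h₀ k)
    (hfin : ∀ i j, 0 < Y i j → 0 < convM q N m h₀ U i j)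
    (hrowq : 0 < rowsum N m U q) :
    (∀ t : ℕ, 1 ≤ t →
      ∑ k : Fin (q + 1), (upd q N m U Y)^[t] h₀ k * rowsum N m U (k : ℕ)
        = ∑ i, ∑ j, Y i j) ∧
    ∃ K : Set (Fin (q + 1) → ℝ), IsCompact K ∧ K ⊆ {h | ∀ k, 0 ≤ h k} ∧
      ∀ t : ℕ, 1 ≤ t → (upd q N m U Y)^[t] h₀ ∈ K := by
  set c : Fin (q + 1) → ℝ := fun k => rowsum N m U k
  set A : Fin (q + 1) → Fin (N + 1) × Fin m → ℝ := fun k => shiftRows U k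
  set y : Fin (N + 1) × Fin m → ℝ := fun p => Y p.1 p.2
  have hA : ∀ k p, 0 ≤ A k p := fun k => shiftRows_nonneg hU k
  have hy : ∀ p, 0 ≤ y p := fun p => hY p.1 p.2
  have hc0 : ∀ k, 0 ≤ c k := fun k => rowsum_nonneg hU k
  have hc : ∀ k p, A k p ≠ 0 → c k ≠ 0 := fun k p hAkp =>
    ((hA k p).lt_of_ne' hAkp |>.trans_le (shiftRows_le_rowsum hU k p)).ne'
  rw [upd_eq_step q U Y]
  have hadm : ∀ t, EM.Admissible A y ((EM.step c A y)^[t] h₀) := by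
    intro t
    induction t with
    | zero =>
      exact ⟨fun k => (h₀pos k).le, fun p hp => convM_eq_mixture h₀ p.1 p.2 ▸ hfin _ _ hp⟩
    | succ t ih =>
      rw [Function.iterate_succ_apply']
      exact ih.step hA hy hc0 hc
  have hmass : ∀ t, 1 ≤ t →
      ∑ k, (EM.step c A y)^[t] h₀ k * c k = ∑ i, ∑ j, Y i j := by
    intro t ht
    obtain ⟨t, rfl⟩ := Nat.exists_eq_add_of_le' ht
    rw [Function.iterate_succ_apply', ← Fintype.sum_prod_type']
    exact EM.sum_step_mul_eq hc fun p hp => ((hadm t).2 p ((hy p).lt_of_ne' hp)).ne'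
  refine ⟨hmass, Set.univ.pi fun _ => Set.Icc 0 ((∑ i, ∑ j, Y i j) / rowsum N m U q),
    isCompact_univ_pi fun _ => isCompact_Icc, fun h hh k => (hh k trivial).1,
    fun t ht => Set.mem_univ_pi.mpr fun k => ⟨(hadm t).1 k, ?_⟩⟩
  exact le_div_of_sum_mul_eq (hadm t).1 (fun k => rowsum_antitone hU (Nat.le_of_lt_succ k.isLt))
    hrowq (hmass t ht) k

/-- invariant simplex.  For every `t ≥ 1` the iterates of the algorithm
satisfy `∑_{k=0}^q hᵗ_k ∑_{l=0}^{N-k} U_{l·} = ∑_{ij} Y_{ij}`; hence, provided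
`∑_{l=0}^{N-q} U_{l·} > 0`, all iterates `hᵗ` (`t ≥ 1`) lie in a fixed compact subset
of `ℝ₊^{q+1}`. -/
theorem invariant_simplex (q N m : ℕ) (hqN : q ≤ N)
    (U Y : Fin (N + 1) → Fin m → ℝ)
    (hU : ∀ i j, 0 ≤ U i j) (hY : ∀ i j, 0 ≤ Y i j)
    (h₀ : Fin (q + 1) → ℝ) (h₀pos : ∀ k, 0 < h₀ k)
    (hfin : ∀ i j, 0 < Y i j → 0 < convM q N m h₀ U i j)
    (hrowq : 0 < rowsum N m U q) :
    (∀ t : ℕ, 1 ≤ t →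
      ∑ k : Fin (q + 1), (upd q N m U Y)^[t] h₀ k * rowsum N m U (k : ℕ)
        = ∑ i, ∑ j, Y i j) ∧
    ∃ K : Set (Fin (q + 1) → ℝ), IsCompact K ∧ K ⊆ {h | ∀ k, 0 ≤ h k} ∧
      ∀ t : ℕ, 1 ≤ t → (upd q N m U Y)^[t] h₀ ∈ K :=
  invariant_simplex_general q N m U Y hU hY h₀ h₀pos hfin hrowq
end

section
/- Law of large numbers for q-dependent divergences: if the rows U_i (i ≥ 0) are i.i.d., Y_i = (T(h*)U)_i ⊙ δ_i with i.i.d. noise independent of U, and E I(Y_q||(T(h)U)_q) < ∞, then the random criterion I_N(h) = (1/N) Σ_{i=0}^N I(Y_i||(T(h)U)_i) converges almost surely to E I(Y_q||(T(h)U)_q) as N → ∞. -/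
/-!
For `i ≥ q` the `i`-th summand is a fixed measurable function of the window
`(U_i, …, U_{i-q}, δ_i)`. These windows are identically distributed, being tuples of distinct
independent variables with matching laws, and windows more than `q` apart are built from disjoint
sets of independent variables. So along each residue class mod `q + 1` the summands are pairwise
independent and identically distributed, and the strong law applies class by class; the class
averages recombine into the full average since each class receives asymptotically a
`1 / (q + 1)` share of the indices, and the first `q` summands do not affect the limit.
-/

open scoped BigOperators
open MeasureTheory ProbabilityTheory

/-- Csiszár I-divergence between nonnegative vectors (real-valued version, used where
all relevant quantities are finite). -/
noncomputable def IdivR {m : ℕ} (M N : Fin m → ℝ) : ℝ :=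
  ∑ α, (M α * Real.log (M α / N α) - M α + N α)

/-- The `i`-th row of the convolution `T(h)U`:
`(T(h)U)_{ij} = ∑_{k=0}^{min(i,q)} h_k U_{i-k,j}`, for `ℕ`-indexed rows. -/
def convRow (q m : ℕ) (h : Fin (q + 1) → ℝ) (U : ℕ → Fin m → ℝ) (i : ℕ) : Fin m → ℝ :=
  fun j => ∑ k : Fin (q + 1), if (k : ℕ) ≤ i then h k * U (i - (k : ℕ)) j else 0

open Finset Filter Topology Asymptotics

theorem Finset.sum_range_mul_eq_sum_residues {M : Type*} [AddCommMonoid M] (d N : ℕ)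
    (a : ℕ → M) :
    ∑ i ∈ range (d * N), a i = ∑ r ∈ range d, ∑ k ∈ range N, a (d * k + r) := by
  induction N with
  | zero => simp
  | succ N ih =>
    simp only [Nat.mul_succ, sum_range_add, ih, sum_range_succ, sum_add_distrib]

theorem Finset.sum_range_eq_sum_residues {M : Type*} [AddCommMonoid M] {d : ℕ} (hd : 0 < d)
    (n : ℕ) (a : ℕ → M) :
    ∑ i ∈ range n, a i =
      ∑ r ∈ range d, ∑ k ∈ range (n / d + if r < n % d then 1 else 0), a (d * k + r) := by
  have hs : n % d < d := Nat.mod_lt n hd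
  have htail : ∑ j ∈ range (n % d), a (d * (n / d) + j) =
      ∑ r ∈ range d, if r < n % d then a (d * (n / d) + r) else 0 := by
    rw [← sum_filter]
    congr 1
    ext r
    simp only [mem_range, mem_filter]
    omega
  conv_lhs => rw [← Nat.div_add_mod n d, sum_range_add, sum_range_mul_eq_sum_residues, htail,
    ← sum_add_distrib]
  refine sum_congr rfl fun r _ => ?_
  split_ifs <;> simp [sum_range_succ]

theorem tendsto_sum_range_div_of_residue_classes {d : ℕ} (hd : 0 < d) {a : ℕ → ℝ} {E : ℝ}
    (H : ∀ r < d, Tendsto (fun N : ℕ => (∑ k ∈ range N, a (d * k + r)) / N) atTop (𝓝 E)) :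
    Tendsto (fun n : ℕ => (∑ i ∈ range n, a i) / n) atTop (𝓝 E) := by
  -- `c r n` is the number of `i < n` with `i % d = r`.
  set c : ℕ → ℕ → ℕ := fun r n => n / d + if r < n % d then 1 else 0
  have hcount (n : ℕ) : ∑ r ∈ range d, c r n = n := by
    simpa [c] using (sum_range_eq_sum_residues hd n fun _ => (1 : ℕ)).symm
  have hc_le {r : ℕ} (hr : r ∈ range d) (n : ℕ) : c r n ≤ n :=
    (single_le_sum (fun _ _ => Nat.zero_le _) hr).trans_eq (hcount n)
  have hc_top (r : ℕ) : Tendsto (c r) atTop atTop :=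
    tendsto_atTop_mono (fun n => Nat.le_add_right _ _) (Nat.tendsto_div_const_atTop hd.ne')
  have hclass : ∀ r ∈ range d, (fun n => ∑ k ∈ range (c r n), a (d * k + r) - c r n * E)
      =o[atTop] (fun n => (n : ℝ)) := by
    intro r hr
    have h : (fun N : ℕ => ∑ k ∈ range N, a (d * k + r) - N * E) =o[atTop]
        (fun N => (N : ℝ)) := by
      rw [isLittleO_iff_tendsto' (Eventually.of_forall fun N hN => by simp_all)]
      have hE := (H r (mem_range.1 hr)).sub_const E
      rw [sub_self] at hE
      refine hE.congr' ?_
      filter_upwards [eventually_ne_atTop 0] with N hN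
      field_simp
    refine (h.comp_tendsto (hc_top r)).trans_isBigO (IsBigO.of_bound 1 ?_)
    filter_upwards with n
    simpa using hc_le hr n
  have hsum : (fun n => ∑ i ∈ range n, a i - n * E) =o[atTop] (fun n => (n : ℝ)) := by
    refine (IsLittleO.fun_sum hclass).congr_left fun n => ?_
    rw [sum_range_eq_sum_residues hd n a, sum_sub_distrib, ← sum_mul, ← Nat.cast_sum, hcount]
  have := (isLittleO_iff_tendsto' (Eventually.of_forall fun n hn => by simp_all)).1 hsum
  refine (this.add_const E).congr' ?_ |>.trans (by simp)
  filter_upwards [eventually_ne_atTop 0] with n hn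
  field_simp
  ring

theorem tendsto_one_div_mul_sum_range_succ_of_shift {a : ℕ → ℝ} {E : ℝ} (q : ℕ)
    (h : Tendsto (fun n : ℕ => (∑ i ∈ range n, a (q + i)) / n) atTop (𝓝 E)) :
    Tendsto (fun n : ℕ => (1 / (n : ℝ)) * ∑ i ∈ range (n + 1), a i) atTop (𝓝 E) := by
  rw [← tendsto_add_atTop_iff_nat q]
  have hhead : Tendsto (fun n : ℕ => (∑ i ∈ range q, a i) / ((n : ℝ) + q)) atTop (𝓝 0) :=
    tendsto_const_nhds.div_atTop (tendsto_atTop_add_const_right _ _ tendsto_natCast_atTop_atTop)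
  have htail : Tendsto (fun n : ℕ => (∑ i ∈ range (n + 1), a (q + i)) / ((n : ℝ) + 1))
      atTop (𝓝 E) := by
    simpa using (tendsto_add_atTop_iff_nat 1).2 h
  have hratio : Tendsto (fun n : ℕ => ((n : ℝ) + 1) / (n + q)) atTop (𝓝 1) := by
    have := (tendsto_natCast_div_add_atTop ((q : ℝ) - 1)).comp (tendsto_add_atTop_nat 1)
    refine this.congr fun n => ?_
    simp only [Function.comp_apply, Nat.cast_succ]
    ring_nf
  have := hhead.add (htail.mul hratio)
  rw [zero_add, mul_one] at this
  refine this.congr' ?_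
  filter_upwards [eventually_ne_atTop 0] with n hn
  rw [show n + q + 1 = q + (n + 1) by ring, sum_range_add a q (n + 1)]
  push_cast
  field_simp

theorem strong_law_ae_real_of_indepFun_of_add_lt {Ω : Type*} [MeasurableSpace Ω] {μ : Measure Ω}
    [IsProbabilityMeasure μ] {X : ℕ → Ω → ℝ} (q : ℕ) (hint : Integrable (X 0) μ)
    (hindep : ∀ a b, a + q < b → IndepFun (X a) (X b) μ)
    (hident : ∀ i, IdentDistrib (X i) (X 0) μ μ) :
    ∀ᵐ ω ∂μ, Tendsto (fun n : ℕ => (∑ i ∈ range n, X i ω) / n) atTop (𝓝 μ[X 0]) := by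
  have hclass (r : ℕ) : ∀ᵐ ω ∂μ,
      Tendsto (fun N : ℕ => (∑ k ∈ range N, X ((q + 1) * k + r) ω) / N) atTop (𝓝 μ[X 0]) := by
    have hpair : Pairwise (Function.onFun (IndepFun · · μ) fun k => X ((q + 1) * k + r)) := by
      have hlt {k k' : ℕ} (hkk' : k < k') :
          IndepFun (X ((q + 1) * k + r)) (X ((q + 1) * k' + r)) μ := by
        refine hindep _ _ ?_
        have := Nat.mul_le_mul_left (q + 1) hkk'
        rw [Nat.mul_succ] at this
        omega
      intro k k' hne
      rcases hne.lt_or_gt with h | h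
      exacts [hlt h, (hlt h).symm]
    have hident' (k : ℕ) : IdentDistrib (X ((q + 1) * k + r)) (X r) μ μ :=
      (hident _).trans (hident r).symm
    simpa [(hident r).integral_eq] using
      strong_law_ae_real _ (by simpa using (hident r).integrable_iff.2 hint) hpair
        (by simpa using hident')
  filter_upwards [ae_all_iff.2 hclass] with ω hω
  exact tendsto_sum_range_div_of_residue_classes q.succ_pos fun r _ => hω r

section Tuples

variable {Ω ι : Type*} [MeasurableSpace Ω] {μ : Measure Ω}

theorem ProbabilityTheory.iIndepFun.indepFun_tuple_of_disjoint {β : ι → Type*}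
    {mβ : ∀ i, MeasurableSpace (β i)} {G : ∀ i, Ω → β i} (hG : iIndepFun G μ)
    (hmeas : ∀ i, Measurable (G i)) {κ κ' : Type*} [Fintype κ] [Fintype κ']
    {e : κ → ι} {e' : κ' → ι} (hdisj : Disjoint (Set.range e) (Set.range e')) :
    IndepFun (fun ω k => G (e k) ω) (fun ω k => G (e' k) ω) μ := by
  classical
  have hST : Disjoint (univ.image e) (univ.image e') := by
    rw [← disjoint_coe]
    simpa using hdisj
  exact (hG.indepFun_finset _ _ hST hmeas).comp
    (φ := fun v k => v ⟨e k, mem_image_of_mem e (mem_univ k)⟩)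
    (ψ := fun v k => v ⟨e' k, mem_image_of_mem e' (mem_univ k)⟩)
    (measurable_pi_lambda _ fun _ => measurable_pi_apply _)
    (measurable_pi_lambda _ fun _ => measurable_pi_apply _)

theorem ProbabilityTheory.iIndepFun.identDistrib_tuple {β : Type*} [MeasurableSpace β]
    {G : ι → Ω → β} (hG : iIndepFun G μ) (hmeas : ∀ i, Measurable (G i)) {κ : Type*} [Fintype κ]
    {e e' : κ → ι} (he : e.Injective) (he' : e'.Injective)
    (hid : ∀ k, IdentDistrib (G (e k)) (G (e' k)) μ μ) :
    IdentDistrib (fun ω k => G (e k) ω) (fun ω k => G (e' k) ω) μ μ where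
  aemeasurable_fst := (measurable_pi_lambda _ fun _ => hmeas _).aemeasurable
  aemeasurable_snd := (measurable_pi_lambda _ fun _ => hmeas _).aemeasurable
  map_eq := by
    rw [(hG.precomp he).map_fun_eq_pi_map fun _ => (hmeas _).aemeasurable,
      (hG.precomp he').map_fun_eq_pi_map fun _ => (hmeas _).aemeasurable]
    simp only [fun k => (hid k).map_eq]

end Tuples

@[fun_prop]
theorem Measurable.idivR {α : Type*} [MeasurableSpace α] {m : ℕ} {f g : α → Fin m → ℝ}
    (hf : Measurable f) (hg : Measurable g) : Measurable fun x => IdivR (f x) (g x) := by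
  unfold IdivR
  fun_prop

theorem convRow_eq_sum_of_le {q m i : ℕ} (h : Fin (q + 1) → ℝ) (U : ℕ → Fin m → ℝ) (hi : q ≤ i) :
    convRow q m h U i = fun j => ∑ k : Fin (q + 1), h k * U (i - k) j := by
  funext j
  exact sum_congr rfl fun k _ => if_pos (k.is_le.trans hi)

-- Positions in the family `Sum.elim U δ` of the variables `U_{i-k}` (`k ≤ q`) and `δ_i`.
def lagWindow (q i : ℕ) : Fin (q + 1) ⊕ Unit → ℕ ⊕ ℕ :=
  Sum.map (fun k => i - k) fun _ => i

theorem lagWindow_injective {q i : ℕ} (hi : q ≤ i) : (lagWindow q i).Injective :=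
  Sum.map_injective.2 ⟨fun k k' (hkk' : i - (k : ℕ) = i - k') =>
    Fin.ext (by have := k.is_le; have := k'.is_le; omega),
    Function.injective_of_subsingleton _⟩

theorem disjoint_range_lagWindow {q a b : ℕ} (hab : a + q < b) :
    Disjoint (Set.range (lagWindow q a)) (Set.range (lagWindow q b)) := by
  rw [Set.disjoint_range_iff]
  rintro (k | _) (k' | _) <;> simp [lagWindow] <;> omega

noncomputable def windowDivergence {q m : ℕ} (hstar h : Fin (q + 1) → ℝ)
    (v : Fin (q + 1) ⊕ Unit → Fin m → ℝ) : ℝ :=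
  IdivR (fun j => (∑ k, hstar k * v (.inl k) j) * v (.inr ()) j) fun j => ∑ k, h k * v (.inl k) j

theorem measurable_windowDivergence {q m : ℕ} (hstar h : Fin (q + 1) → ℝ) :
    Measurable (windowDivergence (m := m) hstar h) := by
  unfold windowDivergence
  fun_prop

theorem idivR_convRow_eq_windowDivergence {q m i : ℕ} (hstar h : Fin (q + 1) → ℝ)
    (U δ : ℕ → Fin m → ℝ) (hi : q ≤ i) :
    IdivR (fun j => convRow q m hstar U i j * δ i j) (convRow q m h U i) =
      windowDivergence hstar h fun x => Sum.elim U δ (lagWindow q i x) := by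
  simp [windowDivergence, lagWindow, convRow_eq_sum_of_le _ _ hi]

theorem lln_q_dependent_general
    {Ω : Type*} [MeasurableSpace Ω] (μ : Measure Ω) [IsProbabilityMeasure μ]
    (q m : ℕ)
    (U : ℕ → Ω → (Fin m → ℝ)) (δ : ℕ → Ω → (Fin m → ℝ))
    (hmeasU : ∀ i, Measurable (U i)) (hmeasδ : ∀ i, Measurable (δ i))
    (hindep : iIndepFun
      (m := fun p : ℕ ⊕ ℕ =>
        Sum.rec (motive := fun p => MeasurableSpace (Sum.elim (fun _ => Fin m → ℝ) (fun _ => Fin m → ℝ) p))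
          (fun _ => (inferInstance : MeasurableSpace (Fin m → ℝ)))
          (fun _ => (inferInstance : MeasurableSpace (Fin m → ℝ))) p)
      (fun p => Sum.rec (motive := fun p => Ω → Sum.elim (fun _ => Fin m → ℝ) (fun _ => Fin m → ℝ) p)
          (fun i => U i) (fun i => δ i) p) μ)
    (hUiid : ∀ i, IdentDistrib (U i) (U 0) μ μ)
    (hδiid : ∀ i, IdentDistrib (δ i) (δ 0) μ μ)
    (hstar h : Fin (q + 1) → ℝ)
    (Y : ℕ → Ω → (Fin m → ℝ))
    (hY : ∀ i ω, Y i ω = fun j => convRow q m hstar (fun l => U l ω) i j * δ i ω j)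
    (hint : Integrable
      (fun ω => IdivR (Y q ω) (convRow q m h (fun l => U l ω) q)) μ) :
    ∀ᵐ ω ∂μ, Filter.Tendsto
      (fun n : ℕ => (1 / (n : ℝ)) *
        ∑ i ∈ Finset.range (n + 1), IdivR (Y i ω) (convRow q m h (fun l => U l ω) i))
      Filter.atTop
      (nhds (∫ ω, IdivR (Y q ω) (convRow q m h (fun l => U l ω) q) ∂μ)) := by
  set G : ℕ ⊕ ℕ → Ω → Fin m → ℝ := Sum.elim U δ
  have hG : iIndepFun G μ := by
    rw [iIndepFun_iff_iIndep] at hindep ⊢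
    convert hindep using 2 with p
    cases p <;> rfl
  have hGmeas : ∀ p, Measurable (G p) := by rintro (i | i) <;> simp [G, hmeasU, hmeasδ]
  set window : ℕ → Ω → Fin (q + 1) ⊕ Unit → Fin m → ℝ := fun i ω x => G (lagWindow q i x) ω
  have hwindow (i : ℕ) (hi : q ≤ i) : (fun ω => IdivR (Y i ω) (convRow q m h (U · ω) i)) =
      windowDivergence hstar h ∘ window i := by
    funext ω
    rw [hY]
    exact idivR_convRow_eq_windowDivergence hstar h (U · ω) (δ · ω) hi
  have hident (n : ℕ) : IdentDistrib (window (q + n)) (window q) μ μ := by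
    refine hG.identDistrib_tuple hGmeas (lagWindow_injective (by omega))
      (lagWindow_injective le_rfl) ?_
    rintro (k | _)
    · exact (hUiid _).trans (hUiid _).symm
    · exact (hδiid _).trans (hδiid _).symm
  have hslln := strong_law_ae_real_of_indepFun_of_add_lt (μ := μ)
    (X := fun n => windowDivergence hstar h ∘ window (q + n)) q
    (by rw [add_zero, ← hwindow q le_rfl]; exact hint)
    (fun a b hab => (hG.indepFun_tuple_of_disjoint hGmeas
      (disjoint_range_lagWindow (by omega : q + a + q < q + b))).comp
        (measurable_windowDivergence hstar h) (measurable_windowDivergence hstar h))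
    (fun n => ((hident n).trans (hident 0).symm).comp (measurable_windowDivergence hstar h))
  filter_upwards [hslln] with ω hω
  refine tendsto_one_div_mul_sum_range_succ_of_shift q ?_
  have hterm (n : ℕ) : IdivR (Y (q + n) ω) (convRow q m h (U · ω) (q + n)) =
      windowDivergence hstar h (window (q + n) ω) :=
    congrFun (hwindow _ (Nat.le_add_right q n)) ω
  simpa only [hterm, hwindow q le_rfl, Function.comp_def, add_zero] using hω

/-- law of large numbers for q-dependent divergences.  If the rows `U_i`
are i.i.d., `Y_i = (T(h*)U)_i ⊙ δ_i` with i.i.d. noise independent of `U`, and the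
divergence at lag `q` is integrable, then
`I_N(h) = (1/N) ∑_{i=0}^N I(Y_i‖(T(h)U)_i) → E I(Y_q‖(T(h)U)_q)` almost surely. -/
theorem lln_q_dependent
    {Ω : Type*} [MeasurableSpace Ω] (μ : Measure Ω) [IsProbabilityMeasure μ]
    (q m : ℕ)
    (U : ℕ → Ω → (Fin m → ℝ)) (δ : ℕ → Ω → (Fin m → ℝ))
    (hmeasU : ∀ i, Measurable (U i)) (hmeasδ : ∀ i, Measurable (δ i))
    (hU_nonneg : ∀ i ω j, 0 ≤ U i ω j) (hδ_nonneg : ∀ i ω j, 0 ≤ δ i ω j)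
    (hindep : iIndepFun
      (m := fun p : ℕ ⊕ ℕ =>
        Sum.rec (motive := fun p => MeasurableSpace (Sum.elim (fun _ => Fin m → ℝ) (fun _ => Fin m → ℝ) p))
          (fun _ => (inferInstance : MeasurableSpace (Fin m → ℝ)))
          (fun _ => (inferInstance : MeasurableSpace (Fin m → ℝ))) p)
      (fun p => Sum.rec (motive := fun p => Ω → Sum.elim (fun _ => Fin m → ℝ) (fun _ => Fin m → ℝ) p)
          (fun i => U i) (fun i => δ i) p) μ)
    (hUiid : ∀ i, IdentDistrib (U i) (U 0) μ μ)
    (hδiid : ∀ i, IdentDistrib (δ i) (δ 0) μ μ)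
    (hstar h : Fin (q + 1) → ℝ)
    (hstar_nonneg : ∀ k, 0 ≤ hstar k) (h_nonneg : ∀ k, 0 ≤ h k)
    (Y : ℕ → Ω → (Fin m → ℝ))
    (hY : ∀ i ω, Y i ω = fun j => convRow q m hstar (fun l => U l ω) i j * δ i ω j)
    (hint : Integrable
      (fun ω => IdivR (Y q ω) (convRow q m h (fun l => U l ω) q)) μ) :
    ∀ᵐ ω ∂μ, Filter.Tendsto
      (fun n : ℕ => (1 / (n : ℝ)) *
        ∑ i ∈ Finset.range (n + 1), IdivR (Y i ω) (convRow q m h (fun l => U l ω) i))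
      Filter.atTop
      (nhds (∫ ω, IdivR (Y q ω) (convRow q m h (fun l => U l ω) q) ∂μ)) :=
  lln_q_dependent_general μ q m U δ hmeasU hmeasδ hindep hUiid hδiid hstar h Y hY hint
end
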